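/- Let f, g : ℝ → ℂ be bounded measurable functions, supported in sets S_f and S_g respectively, with dist(S_f, S_g) ≥ d > 0. Let K : ℝ → ℂ be smooth with all derivatives integrable, and let T be the operator with kernel f(x) K(x - y) g(y). If |K(z)| ≤ C_N |z|^{-N} for some N ≥ 2 and all |z| ≥ d, then ‖T‖_{L²→L²} ≤ C ‖f‖_∞ ‖g‖_∞ d^{1-N} for a constant C depending on C_N and N. -/

import Mathlib

open MeasureTheory Set
open scoped ENNReal NNReal

/-- Schur-test / Cauchy–Schwarz bound for a convolution kernel in `ℝ≥0∞`. -/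
private lemma schur_aux (W : ℝ → ℝ≥0∞) (hW : Measurable W) (hWfin : (∫⁻ z, W z) ≠ ⊤)
    (Φ : ℝ → ℝ≥0∞) (hΦ : Measurable Φ) :
    ∫⁻ x, (∫⁻ y, W (x - y) * Φ y) ^ (2:ℝ) ≤
      (∫⁻ z, W z) ^ (2:ℝ) * ∫⁻ y, Φ y ^ (2:ℝ) := by
  set A := ∫⁻ z, W z with hA
  have h22 : Real.HolderConjugate 2 2 := Real.HolderConjugate.two_two
  have htrans : ∀ x : ℝ, (∫⁻ y, W (x - y)) = A := fun x =>
    (Measure.measurePreserving_sub_left volume x).lintegral_comp hW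
  have htrans' : ∀ y : ℝ, (∫⁻ x, W (x - y)) = A := fun y =>
    (measurePreserving_sub_right volume y).lintegral_comp hW
  have key : ∀ x : ℝ, (∫⁻ y, W (x - y) * Φ y) ^ (2:ℝ) ≤
      A * ∫⁻ y, W (x - y) * Φ y ^ (2:ℝ) := by
    intro x
    have hWx : Measurable fun y : ℝ => W (x - y) := hW.comp (measurable_const.sub measurable_id)
    have cs := ENNReal.lintegral_mul_le_Lp_mul_Lq volume h22
      (f := fun y => W (x - y) ^ (1/2:ℝ)) (g := fun y => W (x - y) ^ (1/2:ℝ) * Φ y)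
      ((hWx.pow measurable_const).aemeasurable)
      (((hWx.pow measurable_const).mul hΦ).aemeasurable)
    have e1 : ∀ y : ℝ, (W (x - y) ^ (1/2:ℝ)) * (W (x - y) ^ (1/2:ℝ) * Φ y)
        = W (x - y) * Φ y := by
      intro y
      rw [← mul_assoc, ← ENNReal.rpow_add_of_nonneg _ _ (by norm_num) (by norm_num)]
      norm_num
    have e2 : ∀ y : ℝ, (W (x - y) ^ (1/2:ℝ)) ^ (2:ℝ) = W (x - y) := by
      intro y
      rw [← ENNReal.rpow_mul]; norm_num
    have e3 : ∀ y : ℝ, (W (x - y) ^ (1/2:ℝ) * Φ y) ^ (2:ℝ)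
        = W (x - y) * Φ y ^ (2:ℝ) := by
      intro y
      rw [ENNReal.mul_rpow_of_nonneg _ _ (by norm_num : (0:ℝ) ≤ 2), ← ENNReal.rpow_mul]
      norm_num
    simp only [Pi.mul_apply, e1, e2, e3] at cs
    rw [htrans x] at cs
    calc (∫⁻ y, W (x - y) * Φ y) ^ (2:ℝ)
        ≤ (A ^ (1/2:ℝ) * (∫⁻ y, W (x - y) * Φ y ^ (2:ℝ)) ^ (1/2:ℝ)) ^ (2:ℝ) :=
          ENNReal.rpow_le_rpow cs (by norm_num)
      _ = A * ∫⁻ y, W (x - y) * Φ y ^ (2:ℝ) := by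
          rw [ENNReal.mul_rpow_of_nonneg _ _ (by norm_num : (0:ℝ) ≤ 2),
            ← ENNReal.rpow_mul, ← ENNReal.rpow_mul]
          norm_num
  calc ∫⁻ x, (∫⁻ y, W (x - y) * Φ y) ^ (2:ℝ)
      ≤ ∫⁻ x, A * ∫⁻ y, W (x - y) * Φ y ^ (2:ℝ) := lintegral_mono key
    _ = A * ∫⁻ x, ∫⁻ y, W (x - y) * Φ y ^ (2:ℝ) := lintegral_const_mul' _ _ hWfin
    _ = A * ∫⁻ y, ∫⁻ x, W (x - y) * Φ y ^ (2:ℝ) := by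
        rw [lintegral_lintegral_swap]
        exact ((hW.comp (measurable_fst.sub measurable_snd)).mul
          ((hΦ.comp measurable_snd).pow measurable_const)).aemeasurable
    _ = A * ∫⁻ y, (∫⁻ x, W (x - y)) * Φ y ^ (2:ℝ) := by
        congr 1; refine lintegral_congr fun y => ?_
        exact lintegral_mul_const'' _ ((hW.comp (measurable_id.sub measurable_const)).aemeasurable : AEMeasurable (fun x : ℝ => W (x - y)) volume)
    _ = A ^ (2:ℝ) * ∫⁻ y, Φ y ^ (2:ℝ) := by
        simp_rw [htrans']
        rw [lintegral_const_mul' _ _ hWfin, ← mul_assoc]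
        congr 1
        rw [show ((2:ℝ)) = ((2:ℕ):ℝ) by norm_num, ENNReal.rpow_natCast, sq]

private lemma W_piece (N CN d : ℝ) (hN : 2 ≤ N) (hCN : 0 ≤ CN) (hd : 0 < d) :
    ∫⁻ z in Ici d, ENNReal.ofReal (CN * |z| ^ (-N)) ≤ ENNReal.ofReal (CN * d ^ (1 - N)) := by
  have hcongr : ∫⁻ z in Ici d, ENNReal.ofReal (CN * |z| ^ (-N))
      = ∫⁻ z in Ici d, ENNReal.ofReal (CN * z ^ (-N)) := by
    refine setLIntegral_congr_fun measurableSet_Ici (fun z hz => ?_)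
    simp only [abs_of_pos (hd.trans_le hz)]
  have hint : IntegrableOn (fun z : ℝ => CN * z ^ (-N)) (Ici d) := by
    refine Integrable.const_mul ?_ CN
    exact (integrableOn_Ici_iff_integrableOn_Ioi (f := fun z : ℝ => z ^ (-N))).2
      (integrableOn_Ioi_rpow_of_lt (by linarith) hd)
  have hnn : 0 ≤ᵐ[volume.restrict (Ici d)] fun z : ℝ => CN * z ^ (-N) := by
    refine (ae_restrict_iff' measurableSet_Ici).2 (ae_of_all _ fun z hz => ?_)
    exact mul_nonneg hCN (Real.rpow_nonneg (le_of_lt (hd.trans_le hz)) _)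
  rw [hcongr, ← ofReal_integral_eq_lintegral_ofReal hint hnn]
  apply ENNReal.ofReal_le_ofReal
  rw [integral_const_mul, integral_Ici_eq_integral_Ioi,
    integral_Ioi_rpow_of_lt (by linarith) hd]
  have h1 : -d ^ (-N + 1) / (-N + 1) = d ^ (1 - N) / (N - 1) := by
    rw [show (1 - N) = -N + 1 by ring]
    rw [div_eq_div_iff (by linarith) (by linarith)]
    ring
  rw [h1]
  have h2 : 0 ≤ d ^ (1 - N) := Real.rpow_nonneg hd.le _
  have h3 : d ^ (1 - N) / (N - 1) ≤ d ^ (1 - N) := by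
    rw [div_le_iff₀ (by linarith : (0:ℝ) < N - 1)]
    nlinarith
  exact mul_le_mul_of_nonneg_left h3 hCN

private lemma W_total (N CN d : ℝ) (hN : 2 ≤ N) (hCN : 0 ≤ CN) (hd : 0 < d) :
    ∫⁻ z : ℝ, ENNReal.ofReal ((Set.indicator {z : ℝ | d ≤ |z|}
        (fun z => CN * |z| ^ (-N))) z) ≤ ENNReal.ofReal (2 * CN * d ^ (1 - N)) := by
  set S : Set ℝ := {z : ℝ | d ≤ |z|} with hS
  have hSeq : S = Iic (-d) ∪ Ici d := by
    ext z
    rw [hS, mem_setOf_eq, le_abs, mem_union, mem_Iic, mem_Ici, le_neg]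
    tauto
  have hSm : MeasurableSet S := by
    rw [hSeq]; exact measurableSet_Iic.union measurableSet_Ici
  have hG : Measurable (fun z : ℝ => ENNReal.ofReal (CN * |z| ^ (-N))) :=
    (measurable_const.mul ((continuous_abs.measurable).pow measurable_const)).ennreal_ofReal
  have hneg : ∫⁻ z in Iic (-d), ENNReal.ofReal (CN * |z| ^ (-N))
      = ∫⁻ z in Ici d, ENNReal.ofReal (CN * |z| ^ (-N)) := by
    have hmp := (Measure.measurePreserving_neg (volume : Measure ℝ)).setLIntegral_comp_preimage
      (measurableSet_Iic : MeasurableSet (Iic (-d))) hG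
    have hpre : (Neg.neg : ℝ → ℝ) ⁻¹' Iic (-d) = Ici d := by
      ext a; simp [mem_Iic, mem_Ici, neg_le_neg_iff]
    rw [hpre] at hmp
    rw [← hmp]
    refine setLIntegral_congr_fun measurableSet_Ici (fun z _ => ?_)
    simp only [abs_neg]
  calc ∫⁻ z : ℝ, ENNReal.ofReal (S.indicator (fun z => CN * |z| ^ (-N)) z)
      = ∫⁻ z in S, ENNReal.ofReal (CN * |z| ^ (-N)) := by
        have hind : ∀ z : ℝ, ENNReal.ofReal (S.indicator (fun z => CN * |z| ^ (-N)) z)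
            = S.indicator (fun z => ENNReal.ofReal (CN * |z| ^ (-N))) z := fun z => by
          by_cases h : z ∈ S <;> simp [h]
        simp_rw [hind]
        exact lintegral_indicator hSm _
    _ = (∫⁻ z in Iic (-d), ENNReal.ofReal (CN * |z| ^ (-N)))
        + ∫⁻ z in Ici d, ENNReal.ofReal (CN * |z| ^ (-N)) := by
        rw [hSeq, lintegral_union measurableSet_Ici
          (Iic_disjoint_Ici.2 (not_le.2 (by linarith : (-d:ℝ) < d)))]
    _ ≤ ENNReal.ofReal (CN * d ^ (1 - N)) + ENNReal.ofReal (CN * d ^ (1 - N)) := by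
        rw [hneg]
        exact add_le_add (W_piece N CN d hN hCN hd) (W_piece N CN d hN hCN hd)
    _ = ENNReal.ofReal (2 * CN * d ^ (1 - N)) := by
        rw [← ENNReal.ofReal_add (by positivity) (by positivity)]
        ring_nf

/-- Operator bound for a convolution-type kernel sandwiched between spatially separated
cutoffs: if `f, g` are bounded, their supports are separated by distance `d > 0`, `K` is
smooth, and `|K(z)| ≤ C_N |z|^{-N}` for `|z| ≥ d` with `N ≥ 2`, then the operator with
kernel `f(x)K(x-y)g(y)` has `L² → L²` norm at most `C ‖f‖_∞ ‖g‖_∞ d^{1-N}`, with `C`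
depending only on `C_N` and `N`. -/
theorem separated_support_bound (N : ℝ) (hN : 2 ≤ N) (CN : ℝ) (hCN : 0 ≤ CN) :
    ∃ C : ℝ, 0 ≤ C ∧ ∀ (f g K : ℝ → ℂ) (d Mf Mg : ℝ), 0 < d →
      (∀ x, ‖f x‖ ≤ Mf) → (∀ x, ‖g x‖ ≤ Mg) →
      (∀ x y, f x ≠ 0 → g y ≠ 0 → d ≤ |x - y|) →
      ContDiff ℝ (⊤ : ℕ∞) K →
      (∀ z : ℝ, d ≤ |z| → ‖K z‖ ≤ CN * |z| ^ (-N)) →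
      ∀ φ : ℝ → ℂ, MemLp φ 2 (volume : Measure ℝ) →
        eLpNorm (fun x => ∫ y, f x * K (x - y) * g y * φ y) 2 (volume : Measure ℝ) ≤
          ENNReal.ofReal (C * Mf * Mg * d ^ (1 - N)) * eLpNorm φ 2 (volume : Measure ℝ) := by
  refine ⟨2 * CN, by positivity, ?_⟩
  intro f g K d Mf Mg hd hf hg hsep hK hKd φ hφ
  have hMf : 0 ≤ Mf := le_trans (norm_nonneg _) (hf 0)
  have hMg : 0 ≤ Mg := le_trans (norm_nonneg _) (hg 0)
  set w : ℝ → ℝ := Set.indicator {z : ℝ | d ≤ |z|} (fun z => CN * |z| ^ (-N)) with hw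
  set W : ℝ → ℝ≥0∞ := fun z => ENNReal.ofReal (w z) with hWdef
  have hSm : MeasurableSet {z : ℝ | d ≤ |z|} :=
    measurableSet_le measurable_const continuous_abs.measurable
  have hWmeas : Measurable W :=
    (Measurable.indicator (measurable_const.mul
      (continuous_abs.measurable.pow measurable_const)) hSm).ennreal_ofReal
  have hWtot : (∫⁻ z, W z) ≤ ENNReal.ofReal (2 * CN * d ^ (1 - N)) :=
    W_total N CN d hN hCN hd
  have hWfin : (∫⁻ z, W z) ≠ ⊤ := ne_top_of_le_ne_top ENNReal.ofReal_ne_top hWtot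
  obtain ⟨Φ, hΦmeas, hΦeq⟩ := hφ.1.enorm
  set c : ℝ≥0∞ := ENNReal.ofReal (Mf * Mg) with hc
  -- pointwise kernel bound
  have hker : ∀ x y : ℝ, (‖f x * K (x - y) * g y * φ y‖₊ : ℝ≥0∞)
      ≤ c * (W (x - y) * (‖φ y‖₊ : ℝ≥0∞)) := by
    intro x y
    by_cases hfx : f x = 0
    · simp [hfx]
    by_cases hgy : g y = 0
    · simp [hgy]
    have hdxy : d ≤ |x - y| := hsep x y hfx hgy
    have hWxy : W (x - y) = ENNReal.ofReal (CN * |x - y| ^ (-N)) := by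
      rw [hWdef, hw]
      simp only []
      rw [Set.indicator_of_mem (show (x - y) ∈ {z : ℝ | d ≤ |z|} from hdxy)]
    have hCk : 0 ≤ CN * |x - y| ^ (-N) :=
      mul_nonneg hCN (Real.rpow_nonneg (abs_nonneg _) _)
    rw [hWxy, hc, ← enorm_eq_nnnorm (φ y), ← ofReal_norm (φ y), ← ENNReal.ofReal_mul hCk,
      ← ENNReal.ofReal_mul (mul_nonneg hMf hMg),
      ← enorm_eq_nnnorm (f x * K (x - y) * g y * φ y), ← ofReal_norm (f x * K (x - y) * g y * φ y)]
    apply ENNReal.ofReal_le_ofReal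
    have h1 : ‖f x * K (x - y) * g y * φ y‖
        = ‖f x‖ * ‖K (x - y)‖ * ‖g y‖ * ‖φ y‖ := by
      simp [norm_mul]
    rw [h1]
    have h2 : ‖f x‖ * ‖K (x - y)‖ * ‖g y‖ * ‖φ y‖
        ≤ Mf * (CN * |x - y| ^ (-N)) * Mg * ‖φ y‖ := by
      gcongr
      · exact hf x
      · exact hKd _ hdxy
      · exact hg y
    calc ‖f x‖ * ‖K (x - y)‖ * ‖g y‖ * ‖φ y‖
        ≤ Mf * (CN * |x - y| ^ (-N)) * Mg * ‖φ y‖ := h2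
      _ = Mf * Mg * (CN * |x - y| ^ (-N) * ‖φ y‖) := by ring
  -- pointwise bound on the operator
  have hTpt : ∀ x : ℝ, (‖∫ y, f x * K (x - y) * g y * φ y‖₊ : ℝ≥0∞)
      ≤ c * ∫⁻ y, W (x - y) * Φ y := by
    intro x
    have hXeq : (∫⁻ y, W (x - y) * (‖φ y‖₊ : ℝ≥0∞)) = ∫⁻ y, W (x - y) * Φ y :=
      lintegral_congr_ae (hΦeq.mono fun y hy => by simp only []; rw [← hy]; rfl)
    calc (‖∫ y, f x * K (x - y) * g y * φ y‖₊ : ℝ≥0∞)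
        ≤ ∫⁻ y, (‖f x * K (x - y) * g y * φ y‖₊ : ℝ≥0∞) :=
          enorm_integral_le_lintegral_enorm _
      _ ≤ ∫⁻ y, c * (W (x - y) * (‖φ y‖₊ : ℝ≥0∞)) := lintegral_mono (hker x)
      _ = c * ∫⁻ y, W (x - y) * (‖φ y‖₊ : ℝ≥0∞) :=
          lintegral_const_mul' _ _ ENNReal.ofReal_ne_top
      _ = c * ∫⁻ y, W (x - y) * Φ y := by rw [hXeq]
  set A := ∫⁻ z, W z with hA
  -- main estimate
  have h2ne : ((2:ℝ≥0∞)) ≠ 0 := by norm_num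
  have h2net : ((2:ℝ≥0∞)) ≠ ⊤ := by norm_num
  rw [eLpNorm_eq_lintegral_rpow_enorm_toReal h2ne h2net,
    eLpNorm_eq_lintegral_rpow_enorm_toReal h2ne h2net]
  simp only [ENNReal.toReal_ofNat]
  have hΦsq : (∫⁻ y, (‖φ y‖₊ : ℝ≥0∞) ^ (2:ℝ)) = ∫⁻ y, Φ y ^ (2:ℝ) :=
    lintegral_congr_ae (hΦeq.mono fun y hy => by simp only []; rw [← hy]; rfl)
  have hmain : (∫⁻ x, (‖∫ y, f x * K (x - y) * g y * φ y‖₊ : ℝ≥0∞) ^ (2:ℝ))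
      ≤ c ^ (2:ℝ) * (A ^ (2:ℝ) * ∫⁻ y, Φ y ^ (2:ℝ)) := by
    calc (∫⁻ x, (‖∫ y, f x * K (x - y) * g y * φ y‖₊ : ℝ≥0∞) ^ (2:ℝ))
        ≤ ∫⁻ x, (c * ∫⁻ y, W (x - y) * Φ y) ^ (2:ℝ) :=
          lintegral_mono fun x => ENNReal.rpow_le_rpow (hTpt x) (by norm_num)
      _ = ∫⁻ x, c ^ (2:ℝ) * (∫⁻ y, W (x - y) * Φ y) ^ (2:ℝ) := by
          refine lintegral_congr fun x => ?_
          rw [ENNReal.mul_rpow_of_nonneg _ _ (by norm_num : (0:ℝ) ≤ 2)]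
      _ = c ^ (2:ℝ) * ∫⁻ x, (∫⁻ y, W (x - y) * Φ y) ^ (2:ℝ) :=
          lintegral_const_mul' _ _
            (ENNReal.rpow_ne_top_of_nonneg (by norm_num) ENNReal.ofReal_ne_top)
      _ ≤ c ^ (2:ℝ) * (A ^ (2:ℝ) * ∫⁻ y, Φ y ^ (2:ℝ)) :=
          mul_le_mul_right (schur_aux W hWmeas hWfin Φ hΦmeas) _
  calc (∫⁻ x, (‖∫ y, f x * K (x - y) * g y * φ y‖₊ : ℝ≥0∞) ^ (2:ℝ)) ^ (1/(2:ℝ))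
      ≤ (c ^ (2:ℝ) * (A ^ (2:ℝ) * ∫⁻ y, Φ y ^ (2:ℝ))) ^ (1/(2:ℝ)) :=
        ENNReal.rpow_le_rpow hmain (by norm_num)
    _ = c * (A * (∫⁻ y, Φ y ^ (2:ℝ)) ^ (1/(2:ℝ))) := by
        rw [ENNReal.mul_rpow_of_nonneg _ _ (by norm_num : (0:ℝ) ≤ 1/2),
          ENNReal.mul_rpow_of_nonneg _ _ (by norm_num : (0:ℝ) ≤ 1/2),
          ← ENNReal.rpow_mul, ← ENNReal.rpow_mul]
        norm_num
    _ = c * A * (∫⁻ y, (‖φ y‖₊ : ℝ≥0∞) ^ (2:ℝ)) ^ (1/(2:ℝ)) := by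
        rw [hΦsq, mul_assoc]
    _ ≤ ENNReal.ofReal (2 * CN * Mf * Mg * d ^ (1 - N)) *
          (∫⁻ y, (‖φ y‖₊ : ℝ≥0∞) ^ (2:ℝ)) ^ (1/(2:ℝ)) := by
        refine mul_le_mul' ?_ le_rfl
        calc c * A ≤ ENNReal.ofReal (Mf * Mg) * ENNReal.ofReal (2 * CN * d ^ (1 - N)) :=
              mul_le_mul' le_rfl hWtot
          _ = ENNReal.ofReal (2 * CN * Mf * Mg * d ^ (1 - N)) := by
              rw [← ENNReal.ofReal_mul (mul_nonneg hMf hMg)]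
              congr 1
              ring
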